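/- Let G = (V, V_E, E, w, v_I) be a weighted arena with maximum absolute weight W, and consider the mean-payoff MP(π) = liminf_{k→∞} (1/k)·∑_{i<k} w(π(i),π(i+1)). Let G' be the weighted arena obtained from G by adding: a new Eve vertex v_I' which becomes the initial vertex, with a weight-0 edge from v_I' to v_I and a weight-0 edge from v_I' to a new Adam vertex c; weight-0 edges from c to two new Adam vertices d₁ and d₂; a self-loop of weight W+1 on d₁; and a self-loop of weight −3W−2 on d₂. Then aVal(G) = W + 1 − Reg(G'), where aVal(G) is the antagonistic value of G under MP and Reg(G') is the regret of G' under MP with both players unrestricted. -/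

import Mathlib

open Filter
open scoped Classical

/-- A weighted arena `(V, V_∃, E, w, v_I)`: `VE` is the set of vertices owned
by Eve (the rest belong to Adam), `E` is the edge relation, `w` the weight
function (only relevant on edges), and `init` the initial vertex. -/
structure Arena (V : Type) where
  VE : Set V
  E : V → V → Prop
  w : V → V → ℝ
  init : V

namespace Arena

variable {V : Type} (A : Arena V)

/-- The arena is total: every vertex has an outgoing edge. -/
def Total : Prop := ∀ v, ∃ u, A.E v u

/-- `l` is a finite `E`-path from the initial vertex ending in `v`. -/
def IsHist (l : List V) (v : V) : Prop :=
  l.Chain' A.E ∧ l.head? = some A.init ∧ l.getLast? = some v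

/-- A strategy for Eve: on every history ending in a vertex of Eve it picks a
successor of that vertex. -/
def EveStrat (σ : List V → V) : Prop :=
  ∀ l v, A.IsHist l v → v ∈ A.VE → A.E v (σ l)

/-- A strategy for Adam: on every history ending in a vertex of Adam it picks
a successor of that vertex. -/
def AdamStrat (τ : List V → V) : Prop :=
  ∀ l v, A.IsHist l v → v ∉ A.VE → A.E v (τ l)

/-- The prefixes (histories) of the unique play consistent with `σ` and `τ`. -/
noncomputable def hist (σ τ : List V → V) : ℕ → List V := fun n =>
  Nat.rec [A.init]
    (fun _ l => l ++ [if l.getLastD A.init ∈ A.VE then σ l else τ l]) n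

/-- The unique play consistent with `σ` and `τ`. -/
noncomputable def play (σ τ : List V → V) (n : ℕ) : V :=
  (A.hist σ τ n).getLastD A.init

/-- The `Inf` payoff of a play: the infimum of the weights seen. -/
noncomputable def InfVal (π : ℕ → V) : ℝ := ⨅ i : ℕ, A.w (π i) (π (i + 1))

/-- The `Sup` payoff of a play: the supremum of the weights seen. -/
noncomputable def SupVal (π : ℕ → V) : ℝ := ⨆ i : ℕ, A.w (π i) (π (i + 1))

/-- The `LimInf` payoff of a play. -/
noncomputable def LimInfVal (π : ℕ → V) : ℝ :=
  Filter.liminf (fun i : ℕ => A.w (π i) (π (i + 1))) atTop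

/-- The `LimSup` payoff of a play. -/
noncomputable def LimSupVal (π : ℕ → V) : ℝ :=
  Filter.limsup (fun i : ℕ => A.w (π i) (π (i + 1))) atTop

/-- The mean-payoff (defined with `liminf`) of a play. -/
noncomputable def MPVal (π : ℕ → V) : ℝ :=
  Filter.liminf
    (fun k : ℕ => (∑ i ∈ Finset.range k, A.w (π i) (π (i + 1))) / k) atTop

/-- The mean-payoff (defined with `limsup`) of a play. -/
noncomputable def MPBarVal (π : ℕ → V) : ℝ :=
  Filter.limsup
    (fun k : ℕ => (∑ i ∈ Finset.range k, A.w (π i) (π (i + 1))) / k) atTop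

/-- The regret of the arena w.r.t. a payoff `val`, where Eve's strategies are
restricted by `PE` and Adam's by `PA`. -/
noncomputable def regretPP (val : (ℕ → V) → ℝ)
    (PE PA : (List V → V) → Prop) : ℝ :=
  ⨅ σ : {σ : List V → V // A.EveStrat σ ∧ PE σ},
    ⨆ τ : {τ : List V → V // A.AdamStrat τ ∧ PA τ},
      ((⨆ σ' : {σ' : List V → V // A.EveStrat σ' ∧ PE σ'},
          val (A.play σ'.1 τ.1)) - val (A.play σ.1 τ.1))

/-- The regret of the arena w.r.t. a payoff `val`, both players unrestricted. -/
noncomputable def regret (val : (ℕ → V) → ℝ) : ℝ :=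
  A.regretPP val (fun _ => True) (fun _ => True)

/-- The antagonistic value. -/
noncomputable def aVal (val : (ℕ → V) → ℝ) : ℝ :=
  ⨆ σ : {σ : List V → V // A.EveStrat σ},
    ⨅ τ : {τ : List V → V // A.AdamStrat τ}, val (A.play σ.1 τ.1)

/-- The cooperative value. -/
noncomputable def cVal (val : (ℕ → V) → ℝ) : ℝ :=
  ⨆ σ : {σ : List V → V // A.EveStrat σ},
    ⨆ τ : {τ : List V → V // A.AdamStrat τ}, val (A.play σ.1 τ.1)

/-- The same arena with the initial vertex moved to `v`. -/
def withInit (v : V) : Arena V := { A with init := v }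

end Arena

/-- The arena `G'` of Lemma 3: `G` extended with a new initial Eve vertex
`v_I' = Sum.inr 0` having weight-0 edges to the old initial vertex and to a
new Adam vertex `c = Sum.inr 1`, which has weight-0 edges to two new Adam
vertices `d₁ = Sum.inr 2` (self-loop of weight `W + 1`) and `d₂ = Sum.inr 3`
(self-loop of weight `-3W - 2`). -/
def primeArena {V : Type} (A : Arena V) (W : ℝ) : Arena (V ⊕ Fin 4) where
  VE := {p | (∃ v ∈ A.VE, p = Sum.inl v) ∨ p = Sum.inr 0}
  E := fun p q =>
    (∃ u v, A.E u v ∧ p = Sum.inl u ∧ q = Sum.inl v) ∨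
    (p = Sum.inr 0 ∧ (q = Sum.inl A.init ∨ q = Sum.inr 1)) ∨
    (p = Sum.inr 1 ∧ (q = Sum.inr 2 ∨ q = Sum.inr 3)) ∨
    (p = Sum.inr 2 ∧ q = Sum.inr 2) ∨
    (p = Sum.inr 3 ∧ q = Sum.inr 3)
  w := fun p q =>
    match p, q with
    | Sum.inl u, Sum.inl v => A.w u v
    | Sum.inr i, Sum.inr j =>
        if i = 2 ∧ j = 2 then W + 1
        else if i = 3 ∧ j = 3 then -3 * W - 2 else 0
    | _, _ => 0
  init := Sum.inr 0


/-!
Every play of `G'` either enters `G`, where its mean-payoff lies in `[-W, W]`, or moves to `c`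
and ends in the loop on `d₁` (mean-payoff `W + 1`) or on `d₂` (mean-payoff `-3W - 2`). Hence no
play is worth more than `W + 1`, and against an Adam who answers `c` with `d₁` Eve's best response
is worth exactly `W + 1`.

If Eve enters `G` and plays an almost optimal strategy there, every Adam strategy leaves her a
regret of at most about `W + 1 - aVal(G)`. Conversely, if Eve enters `G`, Adam answers inside `G`
with an almost optimal counter-strategy and sends `c` to `d₁`, which causes a regret of about
`W + 1 - aVal(G)`; if Eve moves to `c`, Adam sends it to `d₂`, and entering `G` would have been
worth at least `-W`, a regret of at least `2W + 2 ≥ W + 1 - aVal(G)`.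
-/

open Set

theorem liminf_eq_of_tendsto_sub {ι : Type*} {F : Filter ι} [F.NeBot] {f g : ι → ℝ}
    (hgl : IsBoundedUnder (· ≥ ·) F g) (hgu : IsBoundedUnder (· ≤ ·) F g)
    (h : Tendsto (f - g) F (nhds 0)) : liminf f F = liminf g F := by
  have hl := h.isBoundedUnder_ge
  have hu := h.isBoundedUnder_le
  rw [← sub_add_cancel f g]
  refine le_antisymm ?_ ?_
  · simpa [h.limsup_eq] using liminf_add_le hl hu hgl hgu.isCoboundedUnder_ge
  · simpa [h.liminf_eq] using le_liminf_add hl hu hgl hgu.isCoboundedUnder_ge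

noncomputable def cesaroMean (a : ℕ → ℝ) (k : ℕ) : ℝ := (∑ i ∈ Finset.range k, a i) / k

theorem cesaroMean_mem_Icc {a : ℕ → ℝ} {lo hi : ℝ} (h : ∀ i, a i ∈ Icc lo hi) {k : ℕ}
    (hk : 0 < k) : cesaroMean a k ∈ Icc lo hi := by
  have hk' : (0 : ℝ) < k := by exact_mod_cast hk
  have hlo := Finset.sum_le_sum fun i (_ : i ∈ Finset.range k) => (h i).1
  have hhi := Finset.sum_le_sum fun i (_ : i ∈ Finset.range k) => (h i).2
  simp only [Finset.sum_const, Finset.card_range, nsmul_eq_mul] at hlo hhi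
  constructor
  · rw [cesaroMean, le_div_iff₀ hk']; linarith
  · rw [cesaroMean, div_le_iff₀ hk']; linarith

theorem abs_cesaroMean_le {a : ℕ → ℝ} {C : ℝ} (h : ∀ i, |a i| ≤ C) (k : ℕ) :
    |cesaroMean a k| ≤ C := by
  rcases Nat.eq_zero_or_pos k with rfl | hk
  · simpa [cesaroMean] using (abs_nonneg _).trans (h 0)
  · exact abs_le.2 (cesaroMean_mem_Icc (fun i => abs_le.1 (h i)) hk)

theorem liminf_cesaroMean_mem_Icc {a : ℕ → ℝ} {lo hi : ℝ} (h : ∀ i, a i ∈ Icc lo hi) :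
    liminf (cesaroMean a) atTop ∈ Icc lo hi := by
  have hev : ∀ᶠ k in atTop, cesaroMean a k ∈ Icc lo hi :=
    eventually_atTop.2 ⟨1, fun k hk => cesaroMean_mem_Icc h hk⟩
  have hl : IsBoundedUnder (· ≥ ·) atTop (cesaroMean a) :=
    isBoundedUnder_of_eventually_ge (hev.mono fun _ hk => hk.1)
  have hu : IsBoundedUnder (· ≤ ·) atTop (cesaroMean a) :=
    isBoundedUnder_of_eventually_le (hev.mono fun _ hk => hk.2)
  exact ⟨le_liminf_of_le hu.isCoboundedUnder_ge (hev.mono fun _ hk => hk.1),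
    liminf_le_of_frequently_le (hev.mono fun _ hk => hk.2).frequently hl⟩

theorem liminf_cesaroMean_of_eventually_eq {a : ℕ → ℝ} {c : ℝ} (h : ∀ᶠ i in atTop, a i = c) :
    liminf (cesaroMean a) atTop = c := by
  have := (tendsto_const_nhds.congr' (h.mono fun _ hi => hi.symm)).cesaro
  simp only [← div_eq_inv_mul] at this
  exact this.liminf_eq

theorem liminf_cesaroMean_succ {a : ℕ → ℝ} {C : ℝ} (h : ∀ i, |a (i + 1)| ≤ C) :
    liminf (cesaroMean fun i => a (i + 1)) atTop = liminf (cesaroMean a) atTop := by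
  set b := fun i => a (i + 1)
  have hb : ∀ k, |cesaroMean b k| ≤ C := abs_cesaroMean_le h
  have hdiff : ∀ k,
      cesaroMean a (k + 1) - cesaroMean b k = (a 0 - cesaroMean b k) / (k + 1 : ℕ) := by
    intro k
    have hsum : ∑ i ∈ Finset.range (k + 1), a i = a 0 + ∑ i ∈ Finset.range k, b i := by
      rw [Finset.sum_range_succ', add_comm]
    rcases Nat.eq_zero_or_pos k with rfl | hk
    · simp [cesaroMean]
    · have hk' : (k : ℝ) ≠ 0 := by positivity
      simp only [cesaroMean, hsum]
      field_simp
      push_cast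
      ring
  have hbound : ∀ k, ‖cesaroMean a (k + 1) - cesaroMean b k‖ ≤ (|a 0| + C) / (k + 1 : ℕ) := by
    intro k
    rw [Real.norm_eq_abs, hdiff, abs_div, Nat.abs_cast]
    gcongr
    exact (abs_sub _ _).trans (add_le_add_right (hb k) _)
  rw [← liminf_nat_add (cesaroMean a) 1]
  exact (liminf_eq_of_tendsto_sub
    (isBoundedUnder_of ⟨-C, fun k => (abs_le.1 (hb k)).1⟩)
    (isBoundedUnder_of ⟨C, fun k => (abs_le.1 (hb k)).2⟩)
    (squeeze_zero_norm hbound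
      ((tendsto_const_div_atTop_nhds_zero_nat _).comp (tendsto_add_atTop_nat 1)))).symm

namespace Arena

variable {V : Type} (A : Arena V)

noncomputable def legalize (hT : A.Total) (s : List V → V) (l : List V) : V :=
  if A.E (l.getLastD A.init) (s l) then s l else (hT (l.getLastD A.init)).choose

def PayoffIn (val : (ℕ → V) → ℝ) (S : Set ℝ) : Prop :=
  ∀ σ τ, A.EveStrat σ → A.AdamStrat τ → val (A.play σ τ) ∈ S

variable {A}

theorem legalize_edge (hT : A.Total) (s : List V → V) (l : List V) :
    A.E (l.getLastD A.init) (A.legalize hT s l) := by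
  unfold legalize
  split_ifs with h
  exacts [h, (hT _).choose_spec]

theorem legalize_of_edge (hT : A.Total) {s : List V → V} {l : List V}
    (h : A.E (l.getLastD A.init) (s l)) : A.legalize hT s l = s l :=
  if_pos h

theorem getLastD_of_isHist {l : List V} {v : V} (hl : A.IsHist l v) : l.getLastD A.init = v := by
  rw [List.getLastD_eq_getLast?, hl.2.2]
  rfl

theorem eveStrat_legalize (hT : A.Total) (s : List V → V) : A.EveStrat (A.legalize hT s) :=
  fun l _ hl _ => getLastD_of_isHist hl ▸ legalize_edge hT s l

theorem adamStrat_legalize (hT : A.Total) (s : List V → V) : A.AdamStrat (A.legalize hT s) :=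
  fun l _ hl _ => getLastD_of_isHist hl ▸ legalize_edge hT s l

section Play

variable {σ τ : List V → V}

theorem hist_succ (n : ℕ) : A.hist σ τ (n + 1) =
    A.hist σ τ n ++ [if A.play σ τ n ∈ A.VE then σ (A.hist σ τ n) else τ (A.hist σ τ n)] :=
  rfl

theorem play_succ (n : ℕ) : A.play σ τ (n + 1) =
    if A.play σ τ n ∈ A.VE then σ (A.hist σ τ n) else τ (A.hist σ τ n) := by
  rw [play, hist_succ, List.getLastD_concat]

theorem hist_one_of_init_mem (h : A.init ∈ A.VE) : A.hist σ τ 1 = [A.init, σ [A.init]] := by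
  change [A.init, if A.init ∈ A.VE then σ [A.init] else τ [A.init]] = _
  rw [if_pos h]

theorem play_one_of_init_mem (h : A.init ∈ A.VE) : A.play σ τ 1 = σ [A.init] := by
  rw [play, hist_one_of_init_mem h]
  rfl

theorem getLast?_hist (n : ℕ) : (A.hist σ τ n).getLast? = some (A.play σ τ n) := by
  cases n with
  | zero => rfl
  | succ n => rw [hist_succ, List.getLast?_concat, play_succ]

theorem head?_hist (n : ℕ) : (A.hist σ τ n).head? = some A.init := by
  induction n with
  | zero => rfl
  | succ n ih => rw [hist_succ, List.head?_append, ih]; rfl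

theorem isHist_hist (hσ : A.EveStrat σ) (hτ : A.AdamStrat τ) (n : ℕ) :
    A.IsHist (A.hist σ τ n) (A.play σ τ n) := by
  induction n with
  | zero => exact ⟨List.isChain_singleton _, rfl, rfl⟩
  | succ n ih =>
    refine ⟨?_, head?_hist _, getLast?_hist _⟩
    rw [List.Chain', hist_succ, List.isChain_append]
    refine ⟨ih.1, List.isChain_singleton _, fun x hx y hy => ?_⟩
    rw [getLast?_hist, Option.mem_some_iff] at hx
    rw [List.head?_cons, Option.mem_some_iff] at hy
    subst hx hy
    split_ifs with hv
    exacts [hσ _ _ ih hv, hτ _ _ ih hv]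

theorem edge_play (hσ : A.EveStrat σ) (hτ : A.AdamStrat τ) (n : ℕ) :
    A.E (A.play σ τ n) (A.play σ τ (n + 1)) := by
  rw [play_succ]
  split_ifs with hv
  exacts [hσ _ _ (isHist_hist hσ hτ n) hv, hτ _ _ (isHist_hist hσ hτ n) hv]

theorem MPVal_eq_liminf_cesaroMean (π : ℕ → V) :
    A.MPVal π = liminf (cesaroMean fun i => A.w (π i) (π (i + 1))) atTop :=
  rfl

theorem payoffIn_MPVal {lo hi : ℝ} (hw : ∀ u v, A.E u v → A.w u v ∈ Icc lo hi) :
    A.PayoffIn A.MPVal (Icc lo hi) := fun _ _ hσ hτ =>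
  liminf_cesaroMean_mem_Icc fun i => hw _ _ (edge_play hσ hτ i)

theorem MPVal_play_of_sink (hσ : A.EveStrat σ) (hτ : A.AdamStrat τ) {v : V}
    (hsink : ∀ u, A.E v u → u = v) {k : ℕ} (hk : A.play σ τ k = v) :
    A.MPVal (A.play σ τ) = A.w v v := by
  have hstay : ∀ n, A.play σ τ (k + n) = v := by
    intro n
    induction n with
    | zero => exact hk
    | succ n ih => exact hsink _ (ih ▸ edge_play hσ hτ (k + n))
  refine liminf_cesaroMean_of_eventually_eq (eventually_atTop.2 ⟨k, fun i hi => ?_⟩)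
  obtain ⟨n, rfl⟩ := Nat.exists_eq_add_of_le hi
  rw [hstay n, add_assoc, hstay (n + 1)]

end Play

section Values

variable {val : (ℕ → V) → ℝ} {lo hi : ℝ}

theorem bddBelow_range_val_adam (hb : A.PayoffIn val (Icc lo hi)) {σ : List V → V}
    (hσ : A.EveStrat σ) : BddBelow (range fun τ : {τ // A.AdamStrat τ} => val (A.play σ τ.1)) :=
  ⟨lo, forall_mem_range.2 fun τ => (hb _ _ hσ τ.2).1⟩

theorem bddAbove_range_val_eve (hb : A.PayoffIn val (Icc lo hi)) {τ : List V → V}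
    (hτ : A.AdamStrat τ) :
    BddAbove (range fun σ : {σ // A.EveStrat σ ∧ True} => val (A.play σ.1 τ)) :=
  ⟨hi, forall_mem_range.2 fun σ => (hb _ _ σ.2.1 hτ).2⟩

theorem bddAbove_range_iInf_val (hT : A.Total) (hb : A.PayoffIn val (Icc lo hi)) :
    BddAbove (range fun σ : {σ // A.EveStrat σ} =>
      ⨅ τ : {τ // A.AdamStrat τ}, val (A.play σ.1 τ.1)) := by
  let τ₀ : {τ // A.AdamStrat τ} := ⟨_, adamStrat_legalize hT fun _ => A.init⟩
  exact ⟨hi, forall_mem_range.2 fun σ =>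
    (ciInf_le (bddBelow_range_val_adam hb σ.2) τ₀).trans (hb _ _ σ.2 τ₀.2).2⟩

theorem bddAbove_range_regret (hT : A.Total) (hb : A.PayoffIn val (Icc lo hi))
    {σ : List V → V} (hσ : A.EveStrat σ) :
    BddAbove (range fun τ : {τ // A.AdamStrat τ ∧ True} =>
      (⨆ σ' : {σ // A.EveStrat σ ∧ True}, val (A.play σ'.1 τ.1)) - val (A.play σ τ.1)) := by
  have : Nonempty {σ // A.EveStrat σ ∧ True} :=
    ⟨⟨_, eveStrat_legalize hT fun _ => A.init, trivial⟩⟩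
  exact ⟨hi - lo, forall_mem_range.2 fun τ =>
    sub_le_sub (ciSup_le fun σ' => (hb _ _ σ'.2.1 τ.2.1).2) (hb _ _ hσ τ.2.1).1⟩

theorem regret_le (hT : A.Total) (hb : A.PayoffIn val (Icc lo hi))
    {σ : List V → V} (hσ : A.EveStrat σ) {r : ℝ}
    (h : ∀ τ, A.AdamStrat τ → ∀ σ', A.EveStrat σ' → val (A.play σ' τ) - val (A.play σ τ) ≤ r) :
    A.regret val ≤ r := by
  let σ₀ : {σ // A.EveStrat σ ∧ True} := ⟨_, eveStrat_legalize hT fun _ => A.init, trivial⟩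
  let τ₀ : {τ // A.AdamStrat τ ∧ True} := ⟨_, adamStrat_legalize hT fun _ => A.init, trivial⟩
  have : Nonempty {σ // A.EveStrat σ ∧ True} := ⟨σ₀⟩
  have : Nonempty {τ // A.AdamStrat τ ∧ True} := ⟨τ₀⟩
  refine ciInf_le_of_le ⟨lo - hi, forall_mem_range.2 fun σ => ?_⟩ ⟨σ, hσ, trivial⟩
    (ciSup_le fun τ => sub_le_iff_le_add.2 (ciSup_le fun σ' => ?_))
  · refine le_ciSup_of_le (bddAbove_range_regret hT hb σ.2.1) τ₀
      (sub_le_sub ?_ (hb _ _ σ.2.1 τ₀.2.1).2)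
    exact le_ciSup_of_le (bddAbove_range_val_eve hb τ₀.2.1) σ₀ (hb _ _ σ₀.2.1 τ₀.2.1).1
  · exact sub_le_iff_le_add.1 (h τ.1 τ.2.1 σ'.1 σ'.2.1)

theorem le_regret (hT : A.Total) (hb : A.PayoffIn val (Icc lo hi)) {r : ℝ}
    (h : ∀ σ, A.EveStrat σ → ∃ τ σ', A.AdamStrat τ ∧ A.EveStrat σ' ∧
      r ≤ val (A.play σ' τ) - val (A.play σ τ)) :
    r ≤ A.regret val := by
  have : Nonempty {σ // A.EveStrat σ ∧ True} :=
    ⟨⟨_, eveStrat_legalize hT fun _ => A.init, trivial⟩⟩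
  refine le_ciInf fun σ => ?_
  obtain ⟨τ, σ', hτ, hσ', hr⟩ := h σ.1 σ.2.1
  refine le_ciSup_of_le (bddAbove_range_regret hT hb σ.2.1) ⟨τ, hτ, trivial⟩ (hr.trans ?_)
  exact sub_le_sub_right (le_ciSup (bddAbove_range_val_eve hb hτ) ⟨σ', hσ', trivial⟩) _

theorem exists_forall_lt_of_lt_aVal (hT : A.Total) (hb : A.PayoffIn val (Icc lo hi)) {r : ℝ}
    (hr : r < A.aVal val) : ∃ σ, A.EveStrat σ ∧ ∀ τ, A.AdamStrat τ → r < val (A.play σ τ) := by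
  have : Nonempty {σ // A.EveStrat σ} := ⟨⟨_, eveStrat_legalize hT fun _ => A.init⟩⟩
  obtain ⟨σ, hσ⟩ := exists_lt_of_lt_ciSup hr
  exact ⟨σ.1, σ.2, fun τ hτ =>
    hσ.trans_le (ciInf_le (bddBelow_range_val_adam hb σ.2) ⟨τ, hτ⟩)⟩

theorem exists_lt_of_aVal_lt (hT : A.Total) (hb : A.PayoffIn val (Icc lo hi)) {r : ℝ}
    (hr : A.aVal val < r) {σ : List V → V} (hσ : A.EveStrat σ) :
    ∃ τ, A.AdamStrat τ ∧ val (A.play σ τ) < r := by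
  have : Nonempty {τ // A.AdamStrat τ} := ⟨⟨_, adamStrat_legalize hT fun _ => A.init⟩⟩
  have hle := le_ciSup (bddAbove_range_iInf_val hT hb) ⟨σ, hσ⟩
  obtain ⟨τ, hτ⟩ := exists_lt_of_ciInf_lt (hle.trans_lt hr)
  exact ⟨τ.1, τ.2, hτ⟩

theorem le_aVal (hT : A.Total) (hb : A.PayoffIn val (Icc lo hi)) : lo ≤ A.aVal val := by
  have : Nonempty {τ // A.AdamStrat τ} := ⟨⟨_, adamStrat_legalize hT fun _ => A.init⟩⟩
  exact le_ciSup_of_le (bddAbove_range_iInf_val hT hb) ⟨_, eveStrat_legalize hT fun _ => A.init⟩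
    (le_ciInf fun τ => (hb _ _ (eveStrat_legalize hT _) τ.2).1)

end Values

end Arena

namespace primeArena

open Arena

variable {V : Type} {A : Arena V} {W : ℝ}

theorem total (hT : A.Total) : (primeArena A W).Total := by
  rintro (u | i)
  · obtain ⟨v, hv⟩ := hT u
    exact ⟨Sum.inl v, Or.inl ⟨u, v, hv, rfl, rfl⟩⟩
  · fin_cases i
    · exact ⟨Sum.inr 1, Or.inr (Or.inl ⟨rfl, Or.inr rfl⟩)⟩
    · exact ⟨Sum.inr 2, Or.inr (Or.inr (Or.inl ⟨rfl, Or.inl rfl⟩))⟩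
    · exact ⟨Sum.inr 2, Or.inr (Or.inr (Or.inr (Or.inl ⟨rfl, rfl⟩)))⟩
    · exact ⟨Sum.inr 3, Or.inr (Or.inr (Or.inr (Or.inr ⟨rfl, rfl⟩)))⟩

theorem inl_mem_VE {v : V} : Sum.inl v ∈ (primeArena A W).VE ↔ v ∈ A.VE := by
  simp [primeArena]

theorem inr_zero_mem_VE : Sum.inr 0 ∈ (primeArena A W).VE := Or.inr rfl

theorem exists_eq_inl_of_edge {u : V} {q : V ⊕ Fin 4} (h : (primeArena A W).E (Sum.inl u) q) :
    ∃ v, A.E u v ∧ q = Sum.inl v := by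
  rcases h with ⟨u', v, huv, hu, rfl⟩ | ⟨h, _⟩ | ⟨h, _⟩ | ⟨h, _⟩ | ⟨h, _⟩ <;> simp_all

theorem edge_inr_zero {q : V ⊕ Fin 4} (h : (primeArena A W).E (Sum.inr 0) q) :
    q = Sum.inl A.init ∨ q = Sum.inr 1 := by
  rcases h with ⟨_, _, _, h, _⟩ | ⟨_, h⟩ | ⟨h, _⟩ | ⟨h, _⟩ | ⟨h, _⟩ <;> simp_all

theorem eq_of_edge_inr {i : Fin 4} (hi : 2 ≤ i) {q : V ⊕ Fin 4}
    (h : (primeArena A W).E (Sum.inr i) q) : q = Sum.inr i := by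
  rcases h with ⟨_, _, _, h, _⟩ | ⟨h, _⟩ | ⟨h, _⟩ | ⟨h, rfl⟩ | ⟨h, rfl⟩ <;>
    simp only [Sum.inr.injEq, reduceCtorEq] at h <;> subst h <;> simp_all

theorem w_inr_two : (primeArena A W).w (Sum.inr 2) (Sum.inr 2) = W + 1 := rfl

theorem w_inr_three : (primeArena A W).w (Sum.inr 3) (Sum.inr 3) = -3 * W - 2 := rfl

theorem w_mem_Icc (hW0 : 0 ≤ W) (hW : ∀ u v, A.E u v → |A.w u v| ≤ W) (p q : V ⊕ Fin 4)
    (h : (primeArena A W).E p q) : (primeArena A W).w p q ∈ Icc (-3 * W - 2) (W + 1) := by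
  rcases h with ⟨u, v, huv, rfl, rfl⟩ | ⟨rfl, rfl | rfl⟩ | ⟨rfl, rfl | rfl⟩ | ⟨rfl, rfl⟩ |
    ⟨rfl, rfl⟩
  · obtain ⟨hlo, hhi⟩ := abs_le.1 (hW u v huv)
    exact ⟨by change _ ≤ A.w u v; linarith, by change A.w u v ≤ _; linarith⟩
  all_goals
    first | rw [w_inr_two] | rw [w_inr_three] | change (0 : ℝ) ∈ _
    constructor <;> linarith

def liftHist (l : List V) : List (V ⊕ Fin 4) := Sum.inr 0 :: l.map Sum.inl

theorem getLastD_liftHist {l : List V} {v : V} (hl : A.IsHist l v) (d : V ⊕ Fin 4) :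
    (liftHist l).getLastD d = Sum.inl v := by
  rw [liftHist, List.getLastD_cons, List.getLastD_eq_getLast?, List.getLast?_map, hl.2.2]
  rfl

theorem isHist_liftHist {l : List V} {v : V} (hl : A.IsHist l v) :
    (primeArena A W).IsHist (liftHist l) (Sum.inl v) := by
  obtain ⟨hc, hh, hg⟩ := hl
  refine ⟨?_, rfl, ?_⟩
  · rw [liftHist, List.Chain', List.isChain_cons, List.isChain_map, List.head?_map, hh]
    refine ⟨fun b hb => ?_, hc.imp fun a b h => Or.inl ⟨a, b, h, rfl, rfl⟩⟩
    rw [Option.map_some, Option.mem_some_iff] at hb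
    exact hb ▸ Or.inr (Or.inl ⟨rfl, Or.inl rfl⟩)
  · simp [liftHist, List.getLast?_cons, hg]

def Extends (A : Arena V) (P : V → Prop) (s' : List (V ⊕ Fin 4) → V ⊕ Fin 4)
    (s : List V → V) : Prop :=
  ∀ l v, A.IsHist l v → P v → s' (liftHist l) = Sum.inl (s l)

section Simulation

variable {σ' τ' : List (V ⊕ Fin 4) → V ⊕ Fin 4} {σ τ : List V → V}

theorem hist_succ_of_extends (hσ : A.EveStrat σ) (hτ : A.AdamStrat τ)
    (h0 : σ' [Sum.inr 0] = Sum.inl A.init) (hσ' : Extends A (· ∈ A.VE) σ' σ)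
    (hτ' : Extends A (· ∉ A.VE) τ' τ) (n : ℕ) :
    (primeArena A W).hist σ' τ' (n + 1) = liftHist (A.hist σ τ n) := by
  induction n with
  | zero =>
    rw [hist_one_of_init_mem inr_zero_mem_VE]
    exact congrArg (Sum.inr 0 :: [·]) h0
  | succ n ih =>
    have hn := isHist_hist hσ hτ n
    have hlast : (primeArena A W).play σ' τ' (n + 1) = Sum.inl (A.play σ τ n) := by
      rw [Arena.play, ih, getLastD_liftHist hn]
    rw [hist_succ, ih, hlast, hist_succ (A := A), inl_mem_VE]
    split_ifs with hv
    · rw [hσ' _ _ hn hv]; simp [liftHist]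
    · rw [hτ' _ _ hn hv]; simp [liftHist]

theorem MPVal_play_of_extends (hW : ∀ u v, A.E u v → |A.w u v| ≤ W)
    (hσ : A.EveStrat σ) (hτ : A.AdamStrat τ) (h0 : σ' [Sum.inr 0] = Sum.inl A.init)
    (hσ' : Extends A (· ∈ A.VE) σ' σ) (hτ' : Extends A (· ∉ A.VE) τ' τ) :
    (primeArena A W).MPVal ((primeArena A W).play σ' τ') = A.MPVal (A.play σ τ) := by
  have hplay : ∀ n, (primeArena A W).play σ' τ' (n + 1) = Sum.inl (A.play σ τ n) := fun n => by
    rw [Arena.play, hist_succ_of_extends hσ hτ h0 hσ' hτ' n,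
      getLastD_liftHist (isHist_hist hσ hτ n)]
  rw [MPVal_eq_liminf_cesaroMean, MPVal_eq_liminf_cesaroMean, ← liminf_cesaroMean_succ (C := W)]
  · simp only [hplay]
    rfl
  · intro i
    simp only [hplay]
    exact hW _ _ (edge_play hσ hτ i)

theorem MPVal_play_of_inr_one (hσ' : (primeArena A W).EveStrat σ')
    (hτ' : (primeArena A W).AdamStrat τ') (h1 : σ' [Sum.inr 0] = Sum.inr 1) {i : Fin 4}
    (hi : 2 ≤ i) (h2 : τ' [Sum.inr 0, Sum.inr 1] = Sum.inr i) :
    (primeArena A W).MPVal ((primeArena A W).play σ' τ') =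
      (primeArena A W).w (Sum.inr i) (Sum.inr i) := by
  have hplay1 : (primeArena A W).play σ' τ' 1 = Sum.inr 1 :=
    (play_one_of_init_mem inr_zero_mem_VE).trans h1
  refine MPVal_play_of_sink hσ' hτ' (fun _ => eq_of_edge_inr hi) (k := 2) ?_
  rw [play_succ, hplay1, if_neg (by simp [primeArena]), hist_one_of_init_mem inr_zero_mem_VE]
  exact h1 ▸ h2

end Simulation

def projStrat (A : Arena V) (s' : List (V ⊕ Fin 4) → V ⊕ Fin 4) (l : List V) : V :=
  (s' (liftHist l)).elim id fun _ => A.init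

section Projection

variable {σ' τ' : List (V ⊕ Fin 4) → V ⊕ Fin 4}

theorem projStrat_spec {l : List V} {v : V}
    (h : (primeArena A W).E (Sum.inl v) (σ' (liftHist l))) :
    A.E v (projStrat A σ' l) ∧ σ' (liftHist l) = Sum.inl (projStrat A σ' l) := by
  obtain ⟨u, huv, hu⟩ := exists_eq_inl_of_edge h
  simp [projStrat, hu, huv]

theorem eveStrat_projStrat (hσ' : (primeArena A W).EveStrat σ') :
    A.EveStrat (projStrat A σ') := fun _ _ hl hv =>
  (projStrat_spec (hσ' _ _ (isHist_liftHist hl) (inl_mem_VE.2 hv))).1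

theorem extends_projStrat_eve (hσ' : (primeArena A W).EveStrat σ') :
    Extends A (· ∈ A.VE) σ' (projStrat A σ') := fun _ _ hl hv =>
  (projStrat_spec (hσ' _ _ (isHist_liftHist hl) (inl_mem_VE.2 hv))).2

theorem adamStrat_projStrat (hτ' : (primeArena A W).AdamStrat τ') :
    A.AdamStrat (projStrat A τ') := fun _ _ hl hv =>
  (projStrat_spec (hτ' _ _ (isHist_liftHist hl) (mt inl_mem_VE.1 hv))).1

theorem extends_projStrat_adam (hτ' : (primeArena A W).AdamStrat τ') :
    Extends A (· ∉ A.VE) τ' (projStrat A τ') := fun _ _ hl hv =>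
  (projStrat_spec (hτ' _ _ (isHist_liftHist hl) (mt inl_mem_VE.1 hv))).2

theorem MPVal_play_eq_projStrat (hW : ∀ u v, A.E u v → |A.w u v| ≤ W)
    (hσ' : (primeArena A W).EveStrat σ') (hτ' : (primeArena A W).AdamStrat τ')
    (h0 : σ' [Sum.inr 0] = Sum.inl A.init) :
    (primeArena A W).MPVal ((primeArena A W).play σ' τ') =
      A.MPVal (A.play (projStrat A σ') (projStrat A τ')) :=
  MPVal_play_of_extends hW (eveStrat_projStrat hσ') (adamStrat_projStrat hτ') h0
    (extends_projStrat_eve hσ') (extends_projStrat_adam hτ')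

end Projection

/-- Only the move at `v_I'` (for Eve) or at `c` (for Adam) matters, so one target `x` serves all
new vertices; `legalize` repairs the other moves. -/
noncomputable def liftStrat (W : ℝ) (hT : A.Total) (s : List V → V) (x : V ⊕ Fin 4) :
    List (V ⊕ Fin 4) → V ⊕ Fin 4 :=
  (primeArena A W).legalize (total hT) fun l' =>
    (l'.getLastD (Sum.inr 0)).elim (fun _ => Sum.inl (s (l'.filterMap Sum.getLeft?))) fun _ => x

section Lift

variable {hT : A.Total} {s : List V → V} {x : V ⊕ Fin 4}

theorem eveStrat_liftStrat : (primeArena A W).EveStrat (liftStrat W hT s x) :=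
  eveStrat_legalize _ _

theorem adamStrat_liftStrat : (primeArena A W).AdamStrat (liftStrat W hT s x) :=
  adamStrat_legalize _ _

theorem extends_liftStrat {P : V → Prop} (hs : ∀ l v, A.IsHist l v → P v → A.E v (s l)) :
    Extends A P (liftStrat W hT s x) s := by
  intro l v hl hv
  have hproj : (liftHist l).filterMap Sum.getLeft? = l := by
    simp [liftHist, List.filterMap_cons, List.filterMap_map, Function.comp_def]
  unfold liftStrat
  rw [legalize_of_edge] <;> simp only [primeArena, getLastD_liftHist hl, Sum.elim_inl, hproj]
  exact Or.inl ⟨v, s l, hs l v hl hv, rfl, rfl⟩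

theorem liftStrat_of_getLastD {l' : List (V ⊕ Fin 4)} {i : Fin 4}
    (hl : l'.getLastD (Sum.inr 0) = Sum.inr i) (hx : (primeArena A W).E (Sum.inr i) x) :
    liftStrat W hT s x l' = x := by
  unfold liftStrat
  rw [legalize_of_edge] <;> simp only [primeArena, hl, Sum.elim_inr]
  exact hx

end Lift

theorem regret_le_of_lt_aVal (hT : A.Total) (hW0 : 0 ≤ W) (hW : ∀ u v, A.E u v → |A.w u v| ≤ W)
    {r : ℝ} (hr : r < A.aVal A.MPVal) :
    (primeArena A W).regret (primeArena A W).MPVal ≤ W + 1 - r := by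
  obtain ⟨σ, hσ, hσr⟩ :=
    exists_forall_lt_of_lt_aVal hT (payoffIn_MPVal fun u v h => abs_le.1 (hW u v h)) hr
  refine regret_le (σ := liftStrat W hT σ (Sum.inl A.init)) (total hT)
    (payoffIn_MPVal (w_mem_Icc hW0 hW)) eveStrat_liftStrat fun τ' hτ' σ'' hσ'' => ?_
  have h0 : liftStrat W hT σ (Sum.inl A.init) [Sum.inr 0] = Sum.inl A.init :=
    liftStrat_of_getLastD rfl (by simp [primeArena])
  rw [MPVal_play_of_extends hW hσ (adamStrat_projStrat hτ') h0 (extends_liftStrat hσ)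
    (extends_projStrat_adam hτ')]
  linarith [(payoffIn_MPVal (w_mem_Icc hW0 hW) _ _ hσ'' hτ').2, hσr _ (adamStrat_projStrat hτ')]

theorem le_regret_of_aVal_lt (hT : A.Total) (hW0 : 0 ≤ W) (hW : ∀ u v, A.E u v → |A.w u v| ≤ W)
    {r : ℝ} (hr : A.aVal A.MPVal < r) :
    W + 1 - r ≤ (primeArena A W).regret (primeArena A W).MPVal := by
  have hbG : A.PayoffIn A.MPVal (Icc (-W) W) := payoffIn_MPVal fun u v h => abs_le.1 (hW u v h)
  have haVal := le_aVal hT hbG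
  refine le_regret (total hT) (payoffIn_MPVal (w_mem_Icc hW0 hW)) fun σ' hσ' => ?_
  rcases edge_inr_zero (hσ' [Sum.inr 0] _ ⟨List.isChain_singleton _, rfl, rfl⟩ inr_zero_mem_VE)
    with h0 | h1
  · obtain ⟨τ, hτ, hτr⟩ := exists_lt_of_aVal_lt hT hbG hr (eveStrat_projStrat hσ')
    refine ⟨liftStrat W hT τ (Sum.inr 2), liftStrat W hT τ (Sum.inr 1), adamStrat_liftStrat,
      eveStrat_liftStrat, ?_⟩
    rw [MPVal_play_of_extends hW (eveStrat_projStrat hσ') hτ h0 (extends_projStrat_eve hσ')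
      (extends_liftStrat hτ), MPVal_play_of_inr_one eveStrat_liftStrat adamStrat_liftStrat
      (liftStrat_of_getLastD rfl (by simp [primeArena])) le_rfl
      (liftStrat_of_getLastD rfl (by simp [primeArena])), w_inr_two]
    linarith
  · let τ' := liftStrat W hT (fun _ => A.init) (Sum.inr 3)
    let σ'' := liftStrat W hT (fun _ => A.init) (Sum.inl A.init)
    refine ⟨τ', σ'', adamStrat_liftStrat, eveStrat_liftStrat, ?_⟩
    rw [MPVal_play_of_inr_one hσ' adamStrat_liftStrat h1 (by decide)
      (liftStrat_of_getLastD rfl (by simp [primeArena])), w_inr_three,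
      MPVal_play_eq_projStrat hW eveStrat_liftStrat adamStrat_liftStrat
      (liftStrat_of_getLastD rfl (by simp [primeArena]))]
    have henter : -W ≤ A.MPVal (A.play (projStrat A σ'') (projStrat A τ')) :=
      (hbG _ _ (eveStrat_projStrat eveStrat_liftStrat) (adamStrat_projStrat adamStrat_liftStrat)).1
    linarith

end primeArena

theorem aVal_eq_W_add_one_sub_regret_prime_general {V : Type} (A : Arena V)
    (htotal : A.Total)
    (W : ℝ) (hW : IsGreatest {x : ℝ | ∃ u v, A.E u v ∧ x = |A.w u v|} W) :
    A.aVal A.MPVal = W + 1 - (primeArena A W).regret ((primeArena A W).MPVal) := by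
  have hW0 : 0 ≤ W := by
    obtain ⟨u, v, -, rfl⟩ := hW.1
    exact abs_nonneg _
  have hWb : ∀ u v, A.E u v → |A.w u v| ≤ W := fun u v h => hW.2 ⟨u, v, h, rfl⟩
  have hle : (primeArena A W).regret (primeArena A W).MPVal ≤ W + 1 - A.aVal A.MPVal :=
    le_of_forall_pos_le_add fun ε hε => by
      linarith [primeArena.regret_le_of_lt_aVal htotal hW0 hWb (sub_lt_self _ hε)]
  have hge : W + 1 - A.aVal A.MPVal ≤ (primeArena A W).regret (primeArena A W).MPVal :=
    le_of_forall_pos_le_add fun ε hε => by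
      linarith [primeArena.le_regret_of_aVal_lt htotal hW0 hWb (lt_add_of_pos_right _ hε)]
  linarith

/-- the Claim inside Lemma 3, for mean-payoff. For a
weighted arena `G` with integer weights of maximal absolute value `W`, the
antagonistic mean-payoff value of `G` equals `W + 1` minus the regret of `G'`
under the mean-payoff with both players unrestricted. -/
theorem aVal_eq_W_add_one_sub_regret_prime {V : Type} [Fintype V] (A : Arena V)
    (htotal : A.Total)
    (hint : ∀ u v, A.E u v → ∃ k : ℤ, A.w u v = (k : ℝ))
    (W : ℝ) (hW : IsGreatest {x : ℝ | ∃ u v, A.E u v ∧ x = |A.w u v|} W) :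
    A.aVal A.MPVal = W + 1 - (primeArena A W).regret ((primeArena A W).MPVal) :=
  aVal_eq_W_add_one_sub_regret_prime_general A htotal W hW
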